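/- For all n ≥ 1, |Σ_{k=1}^n μ(k)/k| ≤ 1. -/

import Mathlib

open Finset ArithmeticFunction
open scoped ArithmeticFunction.Moebius

/-!
Möbius inversion gives `∑_{k ≤ n} μ(k) ⌊n/k⌋ = 1`. Writing `n/k = ⌊n/k⌋ + (n mod k)/k` therefore
turns `n · ∑_{k ≤ n} μ(k)/k` into `1` plus `n` terms `μ(k) (n mod k)/k`, each of absolute value at
most `1 - 1/n`; so `|n · ∑_{k ≤ n} μ(k)/k| ≤ 1 + (n - 1) = n`.
-/

theorem sum_Ioc_moebius_mul_div_eq_one {R : Type*} [Ring R] {n : ℕ} (hn : 0 < n) :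
    ∑ k ∈ Ioc 0 n, (μ k : R) * (n / k : ℕ) = 1 := by
  have h := sum_Ioc_mul_zeta_eq_sum μ n
  rw [moebius_mul_coe_zeta, sum_eq_single_of_mem 1 (mem_Ioc.2 ⟨one_pos, hn⟩)
    fun k _ hk => one_apply_ne hk, one_one] at h
  simpa only [Int.cast_one, Int.cast_sum, Int.cast_mul, Int.cast_natCast] using
    congrArg (Int.cast : ℤ → R) h.symm

theorem Nat.cast_mod_div_le_one_sub_one_div {n k : ℕ} (hk : 0 < k) (hkn : k ≤ n) :
    ((n % k : ℕ) : ℝ) / k ≤ 1 - 1 / n := by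
  have hmod : ((n % k : ℕ) : ℝ) + 1 ≤ k := by exact_mod_cast Nat.mod_lt n hk
  have hk' : (0 : ℝ) < k := by exact_mod_cast hk
  have hkn' : (k : ℝ) ≤ n := by exact_mod_cast hkn
  rw [div_le_iff₀ hk']
  calc ((n % k : ℕ) : ℝ) ≤ k - 1 := by linarith
    _ ≤ (1 - 1 / n) * k := by
      rw [sub_mul, one_div_mul_eq_div, one_mul]
      gcongr
      exact div_le_one_of_le₀ hkn' (Nat.cast_nonneg n)

theorem abs_sum_div_le_one_of_sum_mul_div_eq_one (a : ℕ → ℝ) (ha : ∀ k, |a k| ≤ 1) {n : ℕ}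
    (hn : 0 < n) (h : ∑ k ∈ Ioc 0 n, a k * (n / k : ℕ) = 1) :
    |∑ k ∈ Ioc 0 n, a k / k| ≤ 1 := by
  have hn' : (0 : ℝ) < n := by exact_mod_cast hn
  have hsplit : n * ∑ k ∈ Ioc 0 n, a k / k = 1 + ∑ k ∈ Ioc 0 n, a k * (n % k : ℕ) / k := by
    rw [← h, mul_sum, ← sum_add_distrib]
    refine sum_congr rfl fun k hk => ?_
    have hk0 : (k : ℝ) ≠ 0 := by exact_mod_cast (mem_Ioc.1 hk).1.ne'
    have hdiv : (n : ℝ) = k * (n / k : ℕ) + (n % k : ℕ) := by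
      exact_mod_cast (Nat.div_add_mod n k).symm
    rw [hdiv]
    field_simp
  have hrem : |∑ k ∈ Ioc 0 n, a k * (n % k : ℕ) / k| ≤ n - 1 := by
    calc |∑ k ∈ Ioc 0 n, a k * (n % k : ℕ) / k|
        ≤ ∑ k ∈ Ioc 0 n, |a k * (n % k : ℕ) / k| := abs_sum_le_sum_abs _ _
      _ ≤ ∑ _k ∈ Ioc 0 n, (1 - 1 / n : ℝ) := by
        refine sum_le_sum fun k hk => ?_
        obtain ⟨hk0, hkn⟩ := mem_Ioc.1 hk
        rw [abs_div, abs_mul, Nat.abs_cast, Nat.abs_cast, mul_div_assoc]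
        calc |a k| * (((n % k : ℕ) : ℝ) / k) ≤ 1 * (1 - 1 / n) := by
              gcongr
              · exact ha k
              · exact Nat.cast_mod_div_le_one_sub_one_div hk0 hkn
          _ = 1 - 1 / n := one_mul _
      _ = n - 1 := by
        rw [sum_const, Nat.card_Ioc, nsmul_eq_mul, Nat.sub_zero]
        field_simp
  have hbound : |(n : ℝ) * ∑ k ∈ Ioc 0 n, a k / k| ≤ n := by
    rw [hsplit]
    calc _ ≤ |(1 : ℝ)| + _ := abs_add_le _ _
      _ ≤ n := by rw [abs_one]; linarith
  rw [abs_mul, abs_of_pos hn'] at hbound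
  exact (mul_le_iff_le_one_right hn').1 (by linarith)

theorem stmt_6 :
    ∀ n : ℕ, 1 ≤ n → |∑ k ∈ Finset.Icc 1 n, (μ k : ℝ) / k| ≤ 1 := by
  intro n hn
  rw [show Icc 1 n = Ioc 0 n from Icc_add_one_left_eq_Ioc 0 n]
  refine abs_sum_div_le_one_of_sum_mul_div_eq_one _ (fun k => ?_) hn ?_
  · exact_mod_cast abs_moebius_le_one
  · exact sum_Ioc_moebius_mul_div_eq_one hn
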